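/- Let T be a positive bounded operator on A²_ρ and 0 < p ≤ 1. If ∫_{𝔹_n} T̃(z)^p dλ_ρ(z) < ∞, then T ∈ S_p. -/

import Mathlib

/-!
Write `k_z = K_z / ‖K_z‖`. Concavity of `t ↦ t ^ p` gives the operator inequality
`T ^ p ≤ (1 - p) ε ^ p + p ε ^ (p - 1) T` for every `ε > 0`; testing it on `k_z` with
`ε = T̃(z)` (or `ε → 0` when `T̃(z) = 0`) yields `⟨T ^ p k_z, k_z⟩ ≤ T̃(z) ^ p`.
On the other hand, Parseval's identity for `√(T ^ p) K_z` and the reproducing property give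
the trace formula `tr (T ^ p) = ∫ ⟨T ^ p K_z, K_z⟩ ρ dv = ∫ ⟨T ^ p k_z, k_z⟩ ‖K_z‖² ρ dv`,
and the upper bound on `‖K_z‖²` turns the last integral into one dominated by `∫ T̃ ^ p dλ_ρ`.
-/

open MeasureTheory Filter Topology
open scoped ENNReal NNReal InnerProductSpace

noncomputable section

/-- Borel structure on `ℂⁿ` with the Euclidean norm. -/
instance (n : ℕ) : MeasurableSpace (EuclideanSpace ℂ (Fin n)) := borel _

instance (n : ℕ) : BorelSpace (EuclideanSpace ℂ (Fin n)) := ⟨rfl⟩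

/-- Lebesgue measure on `ℂⁿ` with the Euclidean norm, transported from `Fin n → ℂ`. -/
instance (n : ℕ) : MeasureSpace (EuclideanSpace ℂ (Fin n)) :=
  ⟨Measure.map (WithLp.equiv 2 (Fin n → ℂ)).symm volume⟩

theorem Real.rpow_le_tangent {p t ε : ℝ} (hp₀ : 0 ≤ p) (hp₁ : p ≤ 1) (ht : 0 ≤ t) (hε : 0 < ε) :
    t ^ p ≤ (1 - p) * ε ^ p + p * ε ^ (p - 1) * t := by
  have amgm : t ^ p * ε ^ (1 - p) ≤ p * t + (1 - p) * ε :=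
    Real.geom_mean_le_arith_mean2_weighted hp₀ (by linarith) ht hε.le (by ring)
  have hεp : ε ^ (p - 1) * ε ^ (1 - p) = 1 := by
    rw [← Real.rpow_add hε]; simp
  have hεp' : ε ^ (p - 1) * ε = ε ^ p := by
    rw [← Real.rpow_add_one hε.ne']; simp
  calc t ^ p = ε ^ (p - 1) * (t ^ p * ε ^ (1 - p)) := by rw [mul_left_comm, hεp, mul_one]
    _ ≤ ε ^ (p - 1) * (p * t + (1 - p) * ε) := by gcongr
    _ = (1 - p) * ε ^ p + p * ε ^ (p - 1) * t := by rw [← hεp']; ring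

theorem CFC.rpow_le_tangent {A : Type*} [PartialOrder A] [Ring A] [StarRing A]
    [TopologicalSpace A] [StarOrderedRing A] [Algebra ℝ A]
    [ContinuousFunctionalCalculus ℝ A IsSelfAdjoint] [NonnegSpectrumClass ℝ A]
    [IsSemitopologicalRing A] [T2Space A] {a : A} (ha : 0 ≤ a) {p ε : ℝ} (hp₀ : 0 ≤ p)
    (hp₁ : p ≤ 1) (hε : 0 < ε) :
    a ^ p ≤ algebraMap ℝ A ((1 - p) * ε ^ p) + (p * ε ^ (p - 1)) • a := by
  rw [CFC.rpow_eq_cfc_real ha, ← cfc_const_mul_id _ a, ← cfc_const _ a,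
    ← cfc_add a (fun _ => (1 - p) * ε ^ p) (fun x => p * ε ^ (p - 1) * x)]
  exact cfc_mono fun x hx => Real.rpow_le_tangent hp₀ hp₁
    (spectrum_nonneg_of_nonneg ha hx) hε

theorem HilbertBasis.tsum_enorm_inner_sq {ι 𝕜 E : Type*} [RCLike 𝕜] [NormedAddCommGroup E]
    [InnerProductSpace 𝕜 E] (b : HilbertBasis ι 𝕜 E) (x : E) :
    ∑' i, ‖⟪b i, x⟫_𝕜‖ₑ ^ 2 = ‖x‖ₑ ^ 2 := by
  have parseval : HasSum (fun i => ‖⟪b i, x⟫_𝕜‖ ^ 2) (‖x‖ ^ 2) := by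
    simpa [b.repr_apply_apply] using lp.hasSum_norm (p := 2) (by norm_num) (b.repr x)
  simp only [← ofReal_norm, ← ENNReal.ofReal_pow (norm_nonneg _)]
  rw [← ENNReal.ofReal_tsum_of_nonneg (fun _ => by positivity) parseval.summable,
    parseval.tsum_eq]

namespace ContinuousLinearMap

theorem re_inner_apply_le_of_le {𝕜 E : Type*} [RCLike 𝕜] [NormedAddCommGroup E]
    [InnerProductSpace 𝕜 E] {S T : E →L[𝕜] E} (h : S ≤ T) (x : E) :
    RCLike.re ⟪x, S x⟫_𝕜 ≤ RCLike.re ⟪x, T x⟫_𝕜 := by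
  have := ((le_def S T).1 h).re_inner_nonneg_right x
  rwa [sub_apply, inner_sub_right, map_sub, sub_nonneg] at this

theorem re_inner_smul_apply_smul {H : Type*} [NormedAddCommGroup H] [InnerProductSpace ℂ H]
    (S : H →L[ℂ] H) (r : ℝ) (x : H) :
    (⟪r • x, S (r • x)⟫_ℂ).re = r ^ 2 * (⟪x, S x⟫_ℂ).re := by
  simp only [← Complex.coe_smul, map_smul, inner_smul_left, inner_smul_right, Complex.conj_ofReal,
    ← mul_assoc, ← Complex.ofReal_mul, Complex.re_ofReal_mul, sq]

variable {H : Type*} [NormedAddCommGroup H] [InnerProductSpace ℂ H] [CompleteSpace H]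

theorem re_inner_apply_eq_norm_sqrt_apply_sq {S : H →L[ℂ] H} (hS : 0 ≤ S) (x : H) :
    (⟪x, S x⟫_ℂ).re = ‖CFC.sqrt S x‖ ^ 2 := by
  have hR : IsSelfAdjoint (CFC.sqrt S) :=
    ((nonneg_iff_isPositive _).1 (CFC.sqrt_nonneg S)).isSelfAdjoint
  conv_lhs => rw [← CFC.sqrt_mul_sqrt_self S hS, mul_apply_eq_comp]
  rw [← adjoint_inner_left, hR.adjoint_eq, ← RCLike.re_to_complex, inner_self_eq_norm_sq]

theorem IsPositive.re_inner_rpow_le {T : H →L[ℂ] H} (hT : T.IsPositive) {p : ℝ} (hp₀ : 0 < p)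
    (hp₁ : p ≤ 1) {x : H} (hx : ‖x‖ = 1) :
    (⟪x, (T ^ p) x⟫_ℂ).re ≤ (⟪x, T x⟫_ℂ).re ^ p := by
  set a := (⟪x, T x⟫_ℂ).re
  have tangent : ∀ ε > 0, (⟪x, (T ^ p) x⟫_ℂ).re ≤ (1 - p) * ε ^ p + p * ε ^ (p - 1) * a := by
    intro ε hε
    have := re_inner_apply_le_of_le
      (CFC.rpow_le_tangent ((nonneg_iff_isPositive T).2 hT) hp₀.le hp₁ hε) x
    simpa [inner_add_right, ← Complex.coe_smul, inner_smul_right,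
      Algebra.algebraMap_eq_smul_one, inner_self_eq_norm_sq_to_K, hx, a] using this
  have ha₀ : 0 ≤ a := by simpa [a] using hT.re_inner_nonneg_right x
  rcases ha₀.eq_or_lt with ha | ha
  · simp only [← ha, mul_zero, add_zero] at tangent ⊢
    rw [Real.zero_rpow hp₀.ne']
    refine ge_of_tendsto (x := 𝓝[>] 0) ?_ (eventually_nhdsWithin_of_forall tangent)
    refine ((continuous_const.mul (Real.continuous_rpow_const hp₀.le)).tendsto' 0 0 ?_).mono_left
      nhdsWithin_le_nhds
    simp [Real.zero_rpow hp₀.ne']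
  · have := tangent a ha
    rwa [mul_assoc, ← Real.rpow_add_one ha.ne', sub_add_cancel, ← add_mul, sub_add_cancel,
      one_mul] at this

theorem IsPositive.re_inner_rpow_le_norm_sq_mul {T : H →L[ℂ] H} (hT : T.IsPositive) {p : ℝ}
    (hp₀ : 0 < p) (hp₁ : p ≤ 1) (v : H) :
    (⟪v, (T ^ p) v⟫_ℂ).re ≤ ‖v‖ ^ 2 * (⟪(‖v‖⁻¹ : ℝ) • v, T ((‖v‖⁻¹ : ℝ) • v)⟫_ℂ).re ^ p := by
  rcases eq_or_ne v 0 with rfl | hv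
  · simp
  have hk : ‖(‖v‖⁻¹ : ℝ) • v‖ = 1 := by
    rw [norm_smul, Real.norm_of_nonneg (by positivity), inv_mul_cancel₀ (norm_ne_zero_iff.2 hv)]
  have hv_eq : v = ‖v‖ • (‖v‖⁻¹ : ℝ) • v := by
    rw [smul_smul, mul_inv_cancel₀ (norm_ne_zero_iff.2 hv), one_smul]
  conv_lhs => rw [hv_eq, re_inner_smul_apply_smul]
  gcongr
  exact hT.re_inner_rpow_le hp₀ hp₁ hk

end ContinuousLinearMap

theorem HilbertBasis.tsum_ofReal_re_inner_eq_lintegral {ι H X : Type*} [Countable ι]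
    [NormedAddCommGroup H] [InnerProductSpace ℂ H] [CompleteSpace H] [MeasurableSpace X]
    {μ : Measure X} (e : HilbertBasis ι ℂ H) {S : H →L[ℂ] H} (hS : 0 ≤ S) {K : X → H}
    (hK_meas : ∀ f, AEMeasurable (fun z => ⟪K z, f⟫_ℂ) μ)
    (hK : ∀ f, ∫⁻ z, ‖⟪K z, f⟫_ℂ‖ₑ ^ 2 ∂μ = ‖f‖ₑ ^ 2) :
    ∑' i, ENNReal.ofReal (⟪e i, S (e i)⟫_ℂ).re =
      ∫⁻ z, ENNReal.ofReal (⟪K z, S (K z)⟫_ℂ).re ∂μ := by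
  set R := CFC.sqrt S
  have hR : IsSelfAdjoint R :=
    ((ContinuousLinearMap.nonneg_iff_isPositive _).1 (CFC.sqrt_nonneg S)).isSelfAdjoint
  have ofReal_eq (x : H) : ENNReal.ofReal (⟪x, S x⟫_ℂ).re = ‖R x‖ₑ ^ 2 := by
    rw [ContinuousLinearMap.re_inner_apply_eq_norm_sqrt_apply_sq hS, ENNReal.ofReal_pow
      (norm_nonneg _), ofReal_norm]
  have swap (z : X) (i : ι) : ‖⟪K z, R (e i)⟫_ℂ‖ₑ = ‖⟪e i, R (K z)⟫_ℂ‖ₑ := by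
    rw [← hR.isSymmetric.apply_clm, ← inner_conj_symm, RCLike.enorm_conj]
  calc ∑' i, ENNReal.ofReal (⟪e i, S (e i)⟫_ℂ).re
      = ∑' i, ∫⁻ z, ‖⟪K z, R (e i)⟫_ℂ‖ₑ ^ 2 ∂μ := by simp only [ofReal_eq, hK]
    _ = ∫⁻ z, ∑' i, ‖⟪e i, R (K z)⟫_ℂ‖ₑ ^ 2 ∂μ := by
      rw [← lintegral_tsum fun i => (hK_meas _).enorm.pow_const 2]
      simp only [swap]
    _ = ∫⁻ z, ENNReal.ofReal (⟪K z, S (K z)⟫_ℂ).re ∂μ := by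
      simp only [e.tsum_enorm_inner_sq, ofReal_eq]

theorem stmt17_general (n : ℕ) (ρ : ℝ → ℝ) (hρ : Measurable ρ)
    (hρpos : ∀ x ∈ Set.Ico (0:ℝ) 1, 0 < ρ x)
    (κ : EuclideanSpace ℂ (Fin n) → ℕ)
    (H : Type*) [NormedAddCommGroup H] [InnerProductSpace ℂ H] [CompleteSpace H]
    (ι : H →ₗ[ℂ] EuclideanSpace ℂ (Fin n) → ℂ)
    (K : EuclideanSpace ℂ (Fin n) → H)
    (hKcont : Continuous K)
    (hrep : ∀ (f : H), ∀ z ∈ Metric.ball (0 : EuclideanSpace ℂ (Fin n)) 1,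
      ι f z = (inner ℂ (K z) f : ℂ))
    (hnorm : ∀ f : H,
      ∫⁻ z in Metric.ball (0 : EuclideanSpace ℂ (Fin n)) 1,
        (‖ι f z‖₊ : ℝ≥0∞) ^ 2 * ENNReal.ofReal (ρ ‖z‖) ∂volume = (‖f‖₊ : ℝ≥0∞) ^ 2)
    (hKsize : ∃ c > (0:ℝ), ∃ C > (0:ℝ),
      ∀ z ∈ Metric.ball (0 : EuclideanSpace ℂ (Fin n)) 1,
        c * (2:ℝ) ^ (κ z) / (1 - ‖z‖) ^ n ≤ ‖K z‖ ^ 2 ∧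
        ‖K z‖ ^ 2 ≤ C * (2:ℝ) ^ (κ z) / (1 - ‖z‖) ^ n)
    (T : H →L[ℂ] H) (hT : T.IsPositive) (p : ℝ) (hp : 0 < p ∧ p ≤ 1)
    (e : HilbertBasis ℕ ℂ H)
    (hmem : ∫⁻ z in Metric.ball (0 : EuclideanSpace ℂ (Fin n)) 1,
      ENNReal.ofReal
        (((inner ℂ ((‖K z‖⁻¹ : ℝ) • K z) (T ((‖K z‖⁻¹ : ℝ) • K z)) : ℂ).re) ^ p
          * (2:ℝ) ^ (κ z) * ρ ‖z‖ / (1 - ‖z‖) ^ n) ∂volume < ⊤) :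
    ∑' l : ℕ, ENNReal.ofReal ((inner ℂ (e l) (CFC.rpow T p (e l)) : ℂ).re) < ⊤ := by
  obtain ⟨hp₀, hp₁⟩ := hp
  obtain ⟨_, -, C, hC, hK_le⟩ := hKsize
  set B := Metric.ball (0 : EuclideanSpace ℂ (Fin n)) 1
  set w := fun z : EuclideanSpace ℂ (Fin n) => ENNReal.ofReal (ρ ‖z‖)
  have hw : Measurable w := (hρ.comp measurable_norm).ennreal_ofReal
  have hK_meas (f : H) : Measurable fun z => ⟪K z, f⟫_ℂ :=
    (hKcont.inner continuous_const).measurable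
  have hK (f : H) : ∫⁻ z, ‖⟪K z, f⟫_ℂ‖ₑ ^ 2 ∂(volume.restrict B).withDensity w = ‖f‖ₑ ^ 2 := by
    rw [lintegral_withDensity_eq_lintegral_mul _ hw ((hK_meas f).enorm.pow_const 2),
      enorm_eq_nnnorm f, ← hnorm f]
    refine setLIntegral_congr_fun measurableSet_ball fun z hz => ?_
    rw [Pi.mul_apply, mul_comm, hrep f z hz, enorm_eq_nnnorm]
  have pointwise : ∀ z ∈ B, w z * ENNReal.ofReal (⟪K z, (T ^ p) (K z)⟫_ℂ).re ≤
      ENNReal.ofReal C * ENNReal.ofReal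
        (((inner ℂ ((‖K z‖⁻¹ : ℝ) • K z) (T ((‖K z‖⁻¹ : ℝ) • K z)) : ℂ).re) ^ p
          * (2:ℝ) ^ (κ z) * ρ ‖z‖ / (1 - ‖z‖) ^ n) := by
    intro z hz
    have hρz : 0 ≤ ρ ‖z‖ := (hρpos _ ⟨norm_nonneg z, mem_ball_zero_iff.1 hz⟩).le
    have hBerezin := (hT.re_inner_rpow_le_norm_sq_mul hp₀ hp₁ (K z)).trans <|
      mul_le_mul_of_nonneg_right (hK_le z hz).2 (Real.rpow_nonneg (hT.re_inner_nonneg_right _) p)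
    rw [← ENNReal.ofReal_mul hρz, ← ENNReal.ofReal_mul hC.le]
    exact ENNReal.ofReal_le_ofReal ((mul_le_mul_of_nonneg_left hBerezin hρz).trans_eq (by ring))
  change ∑' l, ENNReal.ofReal (⟪e l, (T ^ p) (e l)⟫_ℂ).re < ⊤
  rw [e.tsum_ofReal_re_inner_eq_lintegral CFC.rpow_nonneg (fun f => (hK_meas f).aemeasurable) hK]
  calc _ ≤ ∫⁻ z in B, w z * ENNReal.ofReal (⟪K z, (T ^ p) (K z)⟫_ℂ).re :=
        lintegral_withDensity_le_lintegral_mul _ hw _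
    _ ≤ _ := setLIntegral_mono' measurableSet_ball pointwise
    _ = _ := lintegral_const_mul' _ _ ENNReal.ofReal_ne_top
    _ < ⊤ := ENNReal.mul_lt_top ENNReal.ofReal_lt_top hmem

/-- See the docstring body: Schatten class membership of a
positive operator `T` on `A²_ρ` (ρ ∈ S, realized abstractly with kernel functions
`K z`, `‖K z‖² ≍ 2^{κ z}(1-|z|)^{-n}` on `Ω_{κ z}`) versus integrability of the
Berezin transform `T̃(z) = ⟨T k_z, k_z⟩` against `dλ_ρ(z) = 2^{κ z} ρ(|z|)(1-|z|)^{-n} dv(z)`.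
Membership `T ∈ S_p` is expressed by finiteness of `tr(T^p) = Σ_l ⟨T^p e_l, e_l⟩`. -/
theorem stmt17 (n : ℕ) (hn : 0 < n) (ρ : ℝ → ℝ) (hρ : Measurable ρ)
    (hρpos : ∀ x ∈ Set.Ico (0:ℝ) 1, 0 < ρ x)
    (r : ℕ → ℝ)
    (hr : ∀ k, r k ∈ Set.Ico (0:ℝ) 1)
    (hrk : ∀ k, ∫ x in (r k)..1, ρ x = (2:ℝ) ^ (-(k:ℝ)))
    (hS : ∃ A > (1:ℝ), ∀ k, A ≤ (1 - r k) / (1 - r (k+1)))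
    (κ : EuclideanSpace ℂ (Fin n) → ℕ) (hκmeas : Measurable κ)
    (hκ : ∀ z ∈ Metric.ball (0 : EuclideanSpace ℂ (Fin n)) 1,
      r (κ z) ≤ ‖z‖ ∧ ‖z‖ < r (κ z + 1))
    (H : Type*) [NormedAddCommGroup H] [InnerProductSpace ℂ H] [CompleteSpace H]
    (ι : H →ₗ[ℂ] EuclideanSpace ℂ (Fin n) → ℂ)
    (K : EuclideanSpace ℂ (Fin n) → H)
    (hKcont : Continuous K)
    (hKne : ∀ z ∈ Metric.ball (0 : EuclideanSpace ℂ (Fin n)) 1, K z ≠ 0)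
    (hrep : ∀ (f : H), ∀ z ∈ Metric.ball (0 : EuclideanSpace ℂ (Fin n)) 1,
      ι f z = (inner ℂ (K z) f : ℂ))
    (hmeas : ∀ f : H, Measurable (ι f))
    (hnorm : ∀ f : H,
      ∫⁻ z in Metric.ball (0 : EuclideanSpace ℂ (Fin n)) 1,
        (‖ι f z‖₊ : ℝ≥0∞) ^ 2 * ENNReal.ofReal (ρ ‖z‖) ∂volume = (‖f‖₊ : ℝ≥0∞) ^ 2)
    (hKsize : ∃ c > (0:ℝ), ∃ C > (0:ℝ),
      ∀ z ∈ Metric.ball (0 : EuclideanSpace ℂ (Fin n)) 1,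
        c * (2:ℝ) ^ (κ z) / (1 - ‖z‖) ^ n ≤ ‖K z‖ ^ 2 ∧
        ‖K z‖ ^ 2 ≤ C * (2:ℝ) ^ (κ z) / (1 - ‖z‖) ^ n)
    (T : H →L[ℂ] H) (hT : T.IsPositive) (p : ℝ) (hp : 0 < p ∧ p ≤ 1)
    (e : HilbertBasis ℕ ℂ H)
    (hmem : ∫⁻ z in Metric.ball (0 : EuclideanSpace ℂ (Fin n)) 1,
      ENNReal.ofReal
        (((inner ℂ ((‖K z‖⁻¹ : ℝ) • K z) (T ((‖K z‖⁻¹ : ℝ) • K z)) : ℂ).re) ^ p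
          * (2:ℝ) ^ (κ z) * ρ ‖z‖ / (1 - ‖z‖) ^ n) ∂volume < ⊤) :
    ∑' l : ℕ, ENNReal.ofReal ((inner ℂ (e l) (CFC.rpow T p (e l)) : ℂ).re) < ⊤ :=
  stmt17_general n ρ hρ hρpos κ H ι K hKcont hrep hnorm hKsize T hT p hp e hmem
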